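/- arXiv:math/0206142 — 4 statements merged into one kernel-verified Lean document; each statement's English description precedes it below -/
import Mathlib

section
/- The characteristic function of the density k(x) = (1/√(2π)) e^{x/2} e^{-e^x/2} is φ_k(t) = ∫_{-∞}^∞ e^{itx} k(x) dx = (1/√π) · 2^{it} · Γ(1/2 + it), where Γ is the complex Gamma function. -/
open Real Complex

/-- The characteristic function of the density `k x = (1/√(2π)) e^{x/2} e^{-e^x/2}`
is `φ_k(t) = (1/√π) 2^{it} Γ(1/2 + it)`. -/
theorem charFun_of_k (t : ℝ) :
    (∫ x : ℝ, Complex.exp (Complex.I * t * x) *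
        ((1 / Real.sqrt (2 * π)) * Real.exp (x / 2) * Real.exp (-(Real.exp x) / 2) : ℝ)) =
      (1 / Real.sqrt π) * (2 : ℂ) ^ (Complex.I * t) *
        Complex.Gamma (1 / 2 + Complex.I * t) := by
  have hπ : (0:ℝ) < π := Real.pi_pos
  set s : ℂ := 1/2 + Complex.I * t with hs
  have hsre : 0 < s.re := by simp [hs]
  set g : ℝ → ℂ := fun u => ((1 / Real.sqrt (2*π) : ℝ) : ℂ) *
      ((u:ℂ) ^ (s - 1) * Complex.exp (-((1/2 : ℝ) * u))) with hg
  -- change of variables u = exp x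
  have hcov : (∫ x : ℝ in Set.Ioi 0, g x) = ∫ x : ℝ, |Real.exp x| • g (Real.exp x) := by
    have himg : Real.exp '' Set.univ = Set.Ioi 0 := by
      rw [Set.image_univ, Real.range_exp]
    rw [← himg, MeasureTheory.integral_image_eq_integral_abs_deriv_smul MeasurableSet.univ
      (fun x _ => (Real.hasDerivAt_exp x).hasDerivWithinAt)
      (Real.exp_injective.injOn) g, MeasureTheory.Measure.restrict_univ]
  -- pointwise identification of the integrand
  have hpt : ∀ x : ℝ, |Real.exp x| • g (Real.exp x) =
      Complex.exp (Complex.I * t * x) *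
        ((1 / Real.sqrt (2 * π)) * Real.exp (x / 2) * Real.exp (-(Real.exp x) / 2) : ℝ) := by
    intro x
    have hx : (0:ℝ) < Real.exp x := Real.exp_pos x
    have hcp : ((Real.exp x : ℝ) : ℂ) ^ (s - 1) =
        Complex.exp ((s - 1) * x) := by
      rw [Complex.cpow_def_of_ne_zero (by exact_mod_cast hx.ne')]
      rw [← Complex.ofReal_log hx.le, Real.log_exp, mul_comm]
    rw [abs_of_pos hx, hg]
    simp only [real_smul, hcp]
    push_cast
    have hE : (↑x : ℂ) + ((s-1)*↑x + -(1/2 * Complex.exp ↑x)) =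
        Complex.I*↑t*↑x + (↑x/2 + -Complex.exp ↑x/2) := by rw [hs]; ring
    calc Complex.exp ↑x * (1 / (Real.sqrt (2*π) : ℂ) *
            (Complex.exp ((s-1)*↑x) * Complex.exp (-(1/2 * Complex.exp ↑x))))
        = 1 / (Real.sqrt (2*π) : ℂ) *
            Complex.exp ((↑x : ℂ) + ((s-1)*↑x + -(1/2 * Complex.exp ↑x))) := by
          rw [Complex.exp_add, Complex.exp_add]; ring
      _ = 1 / (Real.sqrt (2*π) : ℂ) *
            Complex.exp (Complex.I*↑t*↑x + (↑x/2 + -Complex.exp ↑x/2)) := by rw [hE]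
      _ = Complex.exp (Complex.I*↑t*↑x) * (1 / (Real.sqrt (2*π) : ℂ) *
            Complex.exp (↑x/2) * Complex.exp (-Complex.exp ↑x/2)) := by
          rw [Complex.exp_add, Complex.exp_add]; ring
  -- compute the Ioi integral via the Gamma function
  have hgamma : (∫ x : ℝ in Set.Ioi 0, g x) =
      ((1 / Real.sqrt (2*π) : ℝ) : ℂ) * ((2:ℂ) ^ s * Complex.Gamma s) := by
    rw [hg, MeasureTheory.integral_const_mul]
    congr 1
    have := integral_cpow_mul_exp_neg_mul_Ioi hsre (by norm_num : (0:ℝ) < 1/2)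
    rw [this]
    norm_num
  have key : (∫ x : ℝ, Complex.exp (Complex.I * t * x) *
      ((1 / Real.sqrt (2 * π)) * Real.exp (x / 2) * Real.exp (-(Real.exp x) / 2) : ℝ)) =
      ((1 / Real.sqrt (2*π) : ℝ) : ℂ) * ((2:ℂ) ^ s * Complex.Gamma s) := by
    rw [← hgamma, hcov]
    exact MeasureTheory.integral_congr_ae (Filter.Eventually.of_forall fun x => (hpt x).symm)
  rw [key, hs]
  -- algebra: (1/√(2π)) * 2^(1/2+it) = (1/√π) * 2^(it)
  have h2 : (2:ℂ) ^ ((1:ℂ)/2 + Complex.I * t) =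
      ((Real.sqrt 2 : ℝ) : ℂ) * (2:ℂ) ^ (Complex.I * t) := by
    rw [Complex.cpow_add _ _ two_ne_zero]
    congr 1
    rw [show ((1:ℂ)/2) = ((1/2:ℝ):ℂ) by norm_num,
      show ((2:ℂ)) = ((2:ℝ):ℂ) by norm_num,
      ← Complex.ofReal_cpow (by norm_num : (0:ℝ) ≤ 2)]
    norm_num [Real.sqrt_eq_rpow]
  rw [h2]
  have hsqrt : (1 / Real.sqrt (2*π)) * Real.sqrt 2 = 1 / Real.sqrt π := by
    rw [Real.sqrt_mul (by norm_num : (0:ℝ) ≤ 2)]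
    have h2p : Real.sqrt 2 ≠ 0 := by positivity
    field_simp
  calc ((1 / Real.sqrt (2*π) : ℝ) : ℂ) * (((Real.sqrt 2 : ℝ) : ℂ) * (2:ℂ) ^ (Complex.I * t) *
        Complex.Gamma (1/2 + Complex.I * t))
      = (((1 / Real.sqrt (2*π)) * Real.sqrt 2 : ℝ) : ℂ) * (2:ℂ) ^ (Complex.I * t) *
        Complex.Gamma (1/2 + Complex.I * t) := by push_cast; ring
    _ = _ := by rw [hsqrt]; push_cast; ring
end

section
/- The function w(x) = (48x(x² − 15) cos x − 144(2x² − 5) sin x) / (π x⁷) (extended continuously at 0) has Fourier transform φ_w(t) = ∫ e^{itx} w(x) dx equal to (1 − t²)³ for |t| ≤ 1 and 0 for |t| > 1. -/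
/-!
Let `g(t) = (1 - t²)₊³`. For `a ≠ 0` the integral `∫₋₁¹ e^{au} (1 - u²)³ du` is elementary: an
antiderivative is `e^{au} Σₖ (-1)ᵏ p⁽ᵏ⁾(u) / aᵏ⁺¹` with `p = (1 - u²)³`, and since `p`, `p'` and
`p''` vanish at `±1`, only the higher derivatives contribute. At `a = -ix` this shows that
`w(x) = (2π)⁻¹ ∫ e^{-ixu} g(u) du` for `x ≠ 0`, and then also at `x = 0` by continuity. Since
`w = O(x⁻⁴)` is integrable and `g` is continuous, Fourier inversion recovers
`g(t) = ∫ e^{itx} w(x) dx`.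
-/

open Real MeasureTheory
open Complex (I)
open scoped Complex FourierTransform

noncomputable section

def wandProfile (t : ℝ) : ℝ := max (1 - t ^ 2) 0 ^ 3

def wandKernel (x : ℝ) : ℝ :=
  (48 * x * (x ^ 2 - 15) * cos x - 144 * (2 * x ^ 2 - 5) * sin x) / (π * x ^ 7)

/-- `wandProfile` in the frequency variable of `𝓕`, which pairs `ξ` with `x` as `e^{-2πiξx}`. -/
def wandProfileScaled (ξ : ℝ) : ℂ := wandProfile (2 * π * ξ)

lemma wandProfile_of_abs_le {t : ℝ} (ht : |t| ≤ 1) : wandProfile t = (1 - t ^ 2) ^ 3 := by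
  rw [wandProfile, max_eq_left]
  nlinarith [abs_nonneg t, sq_abs t]

lemma wandProfile_of_one_le_abs {t : ℝ} (ht : 1 ≤ |t|) : wandProfile t = 0 := by
  rw [wandProfile, max_eq_right] <;> nlinarith [abs_nonneg t, sq_abs t]

@[fun_prop]
lemma continuous_wandProfile : Continuous wandProfile := by
  unfold wandProfile; fun_prop

lemma support_wandProfile_subset : Function.support wandProfile ⊆ Set.Ioo (-1) 1 := by
  intro t ht
  by_contra h
  exact ht (wandProfile_of_one_le_abs (by rwa [← not_lt, abs_lt]))

lemma integrable_wandProfile : Integrable wandProfile :=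
  continuous_wandProfile.integrable_of_hasCompactSupport <|
    isCompact_Icc.closure_of_subset (support_wandProfile_subset.trans Set.Ioo_subset_Icc_self)

lemma continuous_wandProfileScaled : Continuous wandProfileScaled := by
  unfold wandProfileScaled; fun_prop

lemma integrable_wandProfileScaled : Integrable wandProfileScaled :=
  Integrable.comp_mul_left' (g := fun u => (wandProfile u : ℂ)) integrable_wandProfile.ofReal
    two_pi_pos.ne'

open Polynomial in
/-- `a⁷ Σₖ (-1)ᵏ p⁽ᵏ⁾ / aᵏ⁺¹` for `p = (1 - z²)³`: `e^{az} · wandAntideriv a / a⁷` is an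
antiderivative of `e^{az} p(z)`. -/
def wandAntideriv (a : ℂ) : ℂ[X] :=
  C (a ^ 6) * (1 - X ^ 2) ^ 3 + C (6 * a ^ 5) * X * (1 - X ^ 2) ^ 2
    - C (6 * a ^ 4) * (1 - 6 * X ^ 2 + 5 * X ^ 4) - C (24 * a ^ 3) * X * (3 - 5 * X ^ 2)
    + C (72 * a ^ 2) * (1 - 5 * X ^ 2) + C (720 * a) * X - 720

open Polynomial in
lemma eval_derivative_wandAntideriv (a z : ℂ) :
    (wandAntideriv a).derivative.eval z =
      a ^ 7 * (1 - z ^ 2) ^ 3 - a * (wandAntideriv a).eval z := by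
  simp only [wandAntideriv, derivative_add, derivative_sub, derivative_mul, derivative_pow,
    derivative_C, derivative_X, derivative_one, derivative_ofNat, eval_add, eval_sub, eval_mul,
    eval_pow, eval_C, eval_X, eval_zero, eval_one, eval_ofNat]
  ring

lemma hasDerivAt_exp_mul_wandAntideriv (a z : ℂ) :
    HasDerivAt (fun z => cexp (a * z) * (wandAntideriv a).eval z)
      (a ^ 7 * (cexp (a * z) * (1 - z ^ 2) ^ 3)) z := by
  have hexp : HasDerivAt (fun z => cexp (a * z)) (cexp (a * z) * a) z := by
    simpa using ((hasDerivAt_id z).const_mul a).cexp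
  refine (hexp.mul ((wandAntideriv a).hasDerivAt z)).congr_deriv ?_
  rw [eval_derivative_wandAntideriv]
  ring

open Polynomial in
lemma integral_exp_mul_one_sub_sq_pow_three {a : ℂ} (ha : a ≠ 0) :
    ∫ u in (-1 : ℝ)..1, cexp (a * u) * (1 - (u : ℂ) ^ 2) ^ 3 =
      (cexp a * (48 * a ^ 3 - 288 * a ^ 2 + 720 * a - 720)
        + cexp (-a) * (48 * a ^ 3 + 288 * a ^ 2 + 720 * a + 720)) / a ^ 7 := by
  have hderiv (u : ℝ) :
      HasDerivAt (fun u : ℝ => cexp (a * u) * (wandAntideriv a).eval (u : ℂ) / a ^ 7)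
        (cexp (a * u) * (1 - (u : ℂ) ^ 2) ^ 3) u :=
    ((hasDerivAt_exp_mul_wandAntideriv a u).comp_ofReal.div_const (a ^ 7)).congr_deriv
      (mul_div_cancel_left₀ _ (pow_ne_zero 7 ha))
  rw [intervalIntegral.integral_eq_sub_of_hasDerivAt (fun u _ => hderiv u)
    ((by fun_prop : Continuous _).intervalIntegrable _ _)]
  simp only [Complex.ofReal_one, Complex.ofReal_neg, wandAntideriv, eval_add, eval_sub, eval_mul,
    eval_pow, eval_C, eval_X, eval_one, eval_ofNat]
  field_simp
  ring

lemma fourier_comp_two_pi_mul (g : ℝ → ℂ) (x : ℝ) :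
    𝓕 (fun ξ : ℝ => g (2 * π * ξ)) x = (2 * π)⁻¹ * ∫ u : ℝ, cexp (-(I * x) * u) * g u := by
  have hscale := Measure.integral_comp_mul_left (fun u : ℝ => cexp (-(I * x) * u) * g u) (2 * π)
  rw [abs_of_pos (inv_pos.mpr two_pi_pos), Complex.real_smul] at hscale
  rw [Real.fourier_real_eq_integral_exp_smul, ← hscale]
  push_cast
  congr 1 with ξ
  rw [smul_eq_mul]
  ring_nf

lemma integral_exp_mul_I_eq_fourierInv (g : ℝ → ℂ) (t : ℝ) :
    ∫ x : ℝ, cexp (I * t * x) * g x = 𝓕⁻ g (t / (2 * π)) := by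
  rw [Real.fourierInv_eq']
  congr 1 with x
  rw [smul_eq_mul, real_inner_comm, RCLike.inner_apply, conj_trivial]
  congr 2
  push_cast
  field_simp

lemma integral_exp_mul_wandProfile (a : ℂ) :
    ∫ u : ℝ, cexp (a * u) * wandProfile u =
      ∫ u in (-1 : ℝ)..1, cexp (a * u) * (1 - (u : ℂ) ^ 2) ^ 3 := by
  rw [← intervalIntegral.integral_eq_integral_of_support_subset]
  · refine intervalIntegral.integral_congr fun u hu => ?_
    rw [Set.uIcc_of_le (by norm_num), Set.mem_Icc, ← abs_le] at hu
    simp [wandProfile_of_abs_le hu]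
  · refine (Function.support_mul_subset_right _ _).trans fun u hu => ?_
    exact Set.Ioo_subset_Ioc_self (support_wandProfile_subset (by simpa using hu))

lemma fourier_wandProfileScaled {x : ℝ} (hx : x ≠ 0) :
    𝓕 wandProfileScaled x = wandKernel x := by
  have hx' : (x : ℂ) ≠ 0 := by exact_mod_cast hx
  have hexp_neg : cexp (-(I * x)) = cos x - sin x * I := by
    rw [show -(I * x) = -x * I by ring, Complex.exp_mul_I, Complex.cos_neg, Complex.sin_neg,
      ← Complex.ofReal_cos, ← Complex.ofReal_sin]
    ring
  have hexp : cexp (I * x) = cos x + sin x * I := by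
    rw [mul_comm, Complex.exp_mul_I, ← Complex.ofReal_cos, ← Complex.ofReal_sin]
  rw [show wandProfileScaled = fun ξ => (wandProfile (2 * π * ξ) : ℂ) from rfl,
    fourier_comp_two_pi_mul (fun u => (wandProfile u : ℂ)),
    integral_exp_mul_wandProfile,
    integral_exp_mul_one_sub_sq_pow_three (by simpa using hx'), neg_neg, hexp_neg, hexp]
  have hI7 : I ^ 7 = -I := (Complex.I_pow_eq_pow_mod 7).trans Complex.I_pow_three
  simp only [wandKernel]
  push_cast
  field_simp
  ring_nf
  rw [Complex.I_pow_three, hI7]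
  ring

lemma abs_wandKernel_numerator_le {x : ℝ} (hx : 1 ≤ |x|) :
    |48 * x * (x ^ 2 - 15) * cos x - 144 * (2 * x ^ 2 - 5) * sin x| ≤ 1776 * |x| ^ 3 := by
  have h15 : |x ^ 2 - 15| ≤ |x| ^ 2 + 15 := (abs_sub _ _).trans (by simp)
  have h5 : |2 * x ^ 2 - 5| ≤ 2 * |x| ^ 2 + 5 := (abs_sub _ _).trans (by simp)
  calc _ ≤ 48 * |x| * |x ^ 2 - 15| * |cos x| + 144 * |2 * x ^ 2 - 5| * |sin x| := by
        refine (abs_sub _ _).trans ?_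
        simp only [abs_mul, abs_of_pos (by norm_num : (0 : ℝ) < 48),
          abs_of_pos (by norm_num : (0 : ℝ) < 144), le_refl]
    _ ≤ 48 * |x| * (|x| ^ 2 + 15) * 1 + 144 * (2 * |x| ^ 2 + 5) * 1 := by
        gcongr
        exacts [abs_cos_le_one x, abs_sin_le_one x]
    _ ≤ 1776 * |x| ^ 3 := by nlinarith

lemma abs_wandKernel_le {x : ℝ} (hx : 1 ≤ |x|) : |wandKernel x| ≤ 1776 * (1 + x ^ 2)⁻¹ := by
  have hx0 : 0 < |x| := one_pos.trans_le hx
  rw [wandKernel, abs_div, abs_mul, abs_of_pos pi_pos, abs_pow, ← div_eq_mul_inv,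
    div_le_div_iff₀ (by positivity) (by positivity)]
  calc _ ≤ 1776 * |x| ^ 3 * (2 * |x| ^ 2) := by
        gcongr
        · exact abs_wandKernel_numerator_le hx
        · nlinarith [sq_abs x]
    _ ≤ 1776 * (π * |x| ^ 7) := by
        nlinarith [pi_gt_three, pow_le_pow_right₀ hx (by norm_num : 5 ≤ 7), pow_pos hx0 5]

lemma continuous_fourier_wandProfileScaled : Continuous (𝓕 wandProfileScaled) :=
  VectorFourier.fourierIntegral_continuous Real.continuous_fourierChar continuous_inner
    integrable_wandProfileScaled

lemma integrable_fourier_wandProfileScaled : Integrable (𝓕 wandProfileScaled) := by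
  refine continuous_fourier_wandProfileScaled.locallyIntegrable.integrable_of_isBigO_cocompact
    (Asymptotics.IsBigO.of_bound 1776 ?_) (integrable_inv_one_add_sq.integrableAtFilter _)
  filter_upwards [tendsto_norm_cocompact_atTop.eventually_ge_atTop 1] with x hx
  rw [Real.norm_eq_abs] at hx
  rw [fourier_wandProfileScaled (abs_pos.mp (one_pos.trans_le hx)), Complex.norm_real,
    Real.norm_eq_abs, Real.norm_of_nonneg (by positivity)]
  exact abs_wandKernel_le hx

end

/-- The Wand kernel `w(x) = (48x(x²−15) cos x − 144(2x²−5) sin x)/(π x⁷)`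
(extended continuously at 0) has Fourier transform `(1−t²)³` on `[-1,1]` and `0` outside. -/
theorem wand_kernel_fourier_transform
    (w : ℝ → ℝ)
    (hw : ∀ x : ℝ, x ≠ 0 →
      w x = (48 * x * (x ^ 2 - 15) * Real.cos x - 144 * (2 * x ^ 2 - 5) * Real.sin x)
              / (π * x ^ 7))
    (hw0 : ContinuousAt w 0) :
    ∀ t : ℝ, (∫ x : ℝ, Complex.exp (Complex.I * t * x) * (w x : ℂ)) =
      if |t| ≤ 1 then ((1 - t ^ 2 : ℝ) ^ 3 : ℂ) else 0 := by
  intro t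
  have hF_ne (x : ℝ) (hx : x ≠ 0) : 𝓕 wandProfileScaled x = w x := by
    rw [fourier_wandProfileScaled hx, hw x hx, wandKernel]
  have hF_zero : 𝓕 wandProfileScaled 0 = w 0 := by
    have hw0' : ContinuousAt (fun x => (w x : ℂ)) 0 :=
      Complex.continuous_ofReal.continuousAt.comp hw0
    have hF0 := continuous_fourier_wandProfileScaled.continuousAt (x := 0)
    exact ((hF0.eventuallyEq_nhds_iff_eventuallyEq_nhdsNE hw0').mp
      (eventually_nhdsWithin_of_forall hF_ne)).eq_of_nhds
  have hF : 𝓕 wandProfileScaled = fun x => (w x : ℂ) :=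
    funext fun x => (eq_or_ne x 0).elim (· ▸ hF_zero) (hF_ne x)
  calc ∫ x : ℝ, cexp (I * t * x) * (w x : ℂ) = 𝓕⁻ (𝓕 wandProfileScaled) (t / (2 * π)) := by
        rw [hF, integral_exp_mul_I_eq_fourierInv]
    _ = wandProfile t := by
        rw [integrable_wandProfileScaled.fourierInv_fourier_eq integrable_fourier_wandProfileScaled
          continuous_wandProfileScaled.continuousAt, wandProfileScaled,
          mul_div_cancel₀ t two_pi_pos.ne']
    _ = _ := by
        split_ifs with ht
        · rw [wandProfile_of_abs_le ht, Complex.ofReal_pow]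
        · rw [wandProfile_of_one_le_abs (not_le.mp ht).le, Complex.ofReal_zero]
end

section
/- With the hypotheses of the previous statement, the leading term satisfies: e^{−π/h} h^{−(1+2α)} · ∫_{−1}^{1} |φ_w(s)|² e^{π|s|/h} ds → 2 A² Γ(2α+1)/π^{1+2α} as h → 0. -/
/-!
Since `|φ_w|` is even, folding `[-1, 1]` onto `[0, 1]` and substituting `s = 1 - t` gives
`e^{-π/h} ∫_{-1}^{1} |φ_w(s)|² e^{π|s|/h} ds = 2 ∫_0^1 ψ(t) e^{-πt/h} dt` with
`ψ(t) = |φ_w(1 - t)|² ~ A² t^{2α}`. This is Watson's lemma: after `t = h u` the integral is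
`h^{1+2α} ∫_0^{1/h} h^{-2α} ψ(h u) e^{-πu} du`, and since `|ψ(t)| ≤ K t^{2α}` on `(0, 1]`, dominated
convergence takes the last integral to `A² ∫_0^∞ u^{2α} e^{-πu} du = A² Γ(2α+1) / π^{2α+1}`.
-/

open Real MeasureTheory Filter Asymptotics Set Topology

lemma tendsto_norm_div_rpow_of_isLittleO {f : ℝ → ℂ} {A α : ℝ}
    (hf : (fun t : ℝ => f t - (A : ℂ) * (t : ℂ) ^ (α : ℂ)) =o[𝓝[>] 0] (fun t : ℝ => t ^ α)) :
    Tendsto (fun t => ‖f t‖ / t ^ α) (𝓝[>] 0) (𝓝 |A|) := by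
  have hnorm : ∀ t > (0 : ℝ), ‖(A : ℂ) * (t : ℂ) ^ (α : ℂ)‖ = |A| * t ^ α := fun t ht => by
    rw [norm_mul, Complex.norm_real, Complex.norm_cpow_eq_rpow_re_of_pos ht, Complex.ofReal_re,
      Real.norm_eq_abs]
  have hsmall : (fun t : ℝ => ‖f t‖ - |A| * t ^ α) =o[𝓝[>] 0] (fun t : ℝ => t ^ α) := by
    refine IsBigO.trans_isLittleO (IsBigO.of_bound 1 ?_) hf
    filter_upwards [self_mem_nhdsWithin] with t ht
    rw [one_mul, ← hnorm t ht, Real.norm_eq_abs]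
    exact abs_norm_sub_norm_le _ _
  have hdiff := hsmall.tendsto_div_nhds_zero.add_const |A|
  rw [zero_add] at hdiff
  refine hdiff.congr' ?_
  filter_upwards [self_mem_nhdsWithin] with t (ht : 0 < t)
  field_simp [(rpow_pos_of_pos ht α).ne']
  ring

section Watson

variable {ψ : ℝ → ℝ} {p b C : ℝ}

lemma exists_abs_le_mul_rpow_of_tendsto_div_rpow
    (hψ : ContinuousOn ψ (Ioc 0 1)) (hlim : Tendsto (fun t => ψ t / t ^ p) (𝓝[>] 0) (𝓝 C)) :
    ∃ K, ∀ t ∈ Ioc (0 : ℝ) 1, |ψ t| ≤ K * t ^ p := by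
  set g : ℝ → ℝ := fun t => ψ t / t ^ p
  obtain ⟨u, hu, hnear⟩ : ∃ u > 0, Ioo 0 u ⊆ {t | |g t| ≤ |C| + 1} :=
    (mem_nhdsGT_iff_exists_Ioo_subset' zero_lt_one).1 <|
      hlim.abs.eventually (ge_mem_nhds (lt_add_one |C|))
  have hg : ContinuousOn g (Icc u 1) := by
    refine (hψ.mono (Icc_subset_Ioc hu le_rfl)).div ?_ fun t ht =>
      (rpow_pos_of_pos (hu.trans_le ht.1) p).ne'
    exact continuousOn_id.rpow_const fun t ht => Or.inl (hu.trans_le ht.1).ne'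
  obtain ⟨M, hM⟩ := isCompact_Icc.exists_bound_of_continuousOn hg
  refine ⟨max (|C| + 1) M, fun t ht => ?_⟩
  have htp : 0 < t ^ p := rpow_pos_of_pos ht.1 p
  have hgt : |g t| ≤ max (|C| + 1) M := by
    rcases lt_or_ge t u with htu | htu
    · exact (hnear ⟨ht.1, htu⟩).trans (le_max_left _ _)
    · exact (hM t ⟨htu, ht.2⟩).trans (le_max_right _ _)
  calc |ψ t| = |g t| * t ^ p := by simp [g, abs_div, abs_of_pos htp, htp.ne']
    _ ≤ max (|C| + 1) M * t ^ p := by gcongr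

lemma integral_mul_exp_neg_div_eq_rpow_mul_setIntegral {h : ℝ} (hh : 0 < h) :
    ∫ t in (0 : ℝ)..1, ψ t * exp (-(b * t) / h) = h ^ (p + 1) *
      ∫ u in Ioi 0, (Ioc 0 h⁻¹).indicator (fun u => ψ (h * u) / h ^ p * exp (-(b * u))) u := by
  have hhp : h ^ p ≠ 0 := (rpow_pos_of_pos hh p).ne'
  rw [setIntegral_indicator measurableSet_Ioc, inter_eq_self_of_subset_right Ioc_subset_Ioi_self,
    ← intervalIntegral.integral_of_le (inv_pos.2 hh).le]
  calc ∫ t in (0 : ℝ)..1, ψ t * exp (-(b * t) / h)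
      = h • ∫ u in (0 : ℝ)..h⁻¹, ψ (h * u) * exp (-(b * (h * u)) / h) := by
        rw [intervalIntegral.smul_integral_comp_mul_left (fun t => ψ t * exp (-(b * t) / h)),
          mul_zero, mul_inv_cancel₀ hh.ne']
    _ = h ^ (p + 1) * ∫ u in (0 : ℝ)..h⁻¹, ψ (h * u) / h ^ p * exp (-(b * u)) := by
        rw [smul_eq_mul, ← intervalIntegral.integral_const_mul,
          ← intervalIntegral.integral_const_mul]
        refine intervalIntegral.integral_congr fun u _ => ?_
        rw [rpow_add_one hh.ne']
        field_simp

lemma mul_mem_Ioc_zero_one {h u : ℝ} (hh : 0 < h) (hu : u ∈ Ioc 0 h⁻¹) : h * u ∈ Ioc (0 : ℝ) 1 :=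
  ⟨mul_pos hh hu.1, (mul_le_mul_of_nonneg_left hu.2 hh.le).trans_eq (mul_inv_cancel₀ hh.ne')⟩

lemma tendsto_setIntegral_indicator_rescale (hp : -1 < p) (hb : 0 < b)
    (hψ : ContinuousOn ψ (Ioc 0 1)) (hlim : Tendsto (fun t => ψ t / t ^ p) (𝓝[>] 0) (𝓝 C)) :
    Tendsto (fun h => ∫ u in Ioi 0,
        (Ioc 0 h⁻¹).indicator (fun u => ψ (h * u) / h ^ p * exp (-(b * u))) u)
      (𝓝[>] 0) (𝓝 (C * Gamma (p + 1) / b ^ (p + 1))) := by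
  obtain ⟨K, hK⟩ := exists_abs_le_mul_rpow_of_tendsto_div_rpow hψ hlim
  have hK0 : 0 ≤ K := by simpa using (abs_nonneg _).trans (hK 1 ⟨one_pos, le_rfl⟩)
  have hval : ∫ u in Ioi 0, C * (u ^ p * exp (-(b * u))) = C * Gamma (p + 1) / b ^ (p + 1) := by
    rw [integral_const_mul, ← add_sub_cancel_right p 1, integral_rpow_mul_exp_neg_mul_Ioi
      (by linarith) hb, add_sub_cancel_right, one_div, inv_rpow hb.le]
    ring
  rw [← hval]
  refine tendsto_integral_filter_of_dominated_convergence (fun u => K * (u ^ p * exp (-(b * u))))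
    ?_ ?_ ?_ ?_
  · filter_upwards [self_mem_nhdsWithin] with h (hh : 0 < h)
    refine (aestronglyMeasurable_indicator_iff measurableSet_Ioc).2 ?_ |>.restrict
    refine ContinuousOn.aestronglyMeasurable ?_ measurableSet_Ioc
    exact ((hψ.comp (continuousOn_const.mul continuousOn_id)
      fun u => mul_mem_Ioc_zero_one hh).div_const _).mul (by fun_prop)
  · filter_upwards [self_mem_nhdsWithin] with h (hh : 0 < h)
    filter_upwards [ae_restrict_mem measurableSet_Ioi] with u (hu : 0 < u)
    have hbound : 0 ≤ K * (u ^ p * exp (-(b * u))) := by positivity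
    by_cases hmem : u ∈ Ioc 0 h⁻¹
    · have hhp : 0 < h ^ p := rpow_pos_of_pos hh p
      have hψhu := hK _ (mul_mem_Ioc_zero_one hh hmem)
      rw [mul_rpow hh.le hu.le] at hψhu
      rw [indicator_of_mem hmem, norm_mul, norm_div, Real.norm_of_nonneg hhp.le,
        Real.norm_of_nonneg (exp_pos _).le, Real.norm_eq_abs, ← mul_assoc]
      gcongr
      rw [div_le_iff₀ hhp]
      linarith
    · rwa [indicator_of_notMem hmem, norm_zero]
  · exact ((integrableOn_rpow_mul_exp_neg_mul_rpow hp one_pos hb).congr_fun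
      (fun u _ => by simp) measurableSet_Ioi).const_mul K
  · filter_upwards [ae_restrict_mem measurableSet_Ioi] with u (hu : 0 < u)
    have hscale : Tendsto (fun h : ℝ => h * u) (𝓝[>] 0) (𝓝[>] 0) := by
      refine tendsto_nhdsWithin_iff.2 ⟨?_, ?_⟩
      · exact ((continuous_mul_const u).tendsto' 0 0 (zero_mul u)).mono_left nhdsWithin_le_nhds
      · filter_upwards [self_mem_nhdsWithin] with h (hh : 0 < h) using mul_pos hh hu
    refine ((hlim.comp hscale).mul_const (u ^ p * exp (-(b * u)))).congr' ?_
    filter_upwards [Ioo_mem_nhdsGT (inv_pos.2 hu)] with h hh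
    have humem : u ∈ Ioc 0 h⁻¹ := ⟨hu, (le_inv_comm₀ hh.1 hu).1 hh.2.le⟩
    rw [Function.comp_apply, indicator_of_mem humem, mul_rpow hh.1.le hu.le]
    field_simp [(rpow_pos_of_pos hu p).ne']

theorem tendsto_rpow_mul_integral_mul_exp_neg_div (hp : -1 < p) (hb : 0 < b)
    (hψ : ContinuousOn ψ (Ioc 0 1)) (hlim : Tendsto (fun t => ψ t / t ^ p) (𝓝[>] 0) (𝓝 C)) :
    Tendsto (fun h => h ^ (-(p + 1)) * ∫ t in (0 : ℝ)..1, ψ t * exp (-(b * t) / h)) (𝓝[>] 0)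
      (𝓝 (C * Gamma (p + 1) / b ^ (p + 1))) := by
  refine (tendsto_setIntegral_indicator_rescale hp hb hψ hlim).congr' ?_
  filter_upwards [self_mem_nhdsWithin] with h (hh : 0 < h)
  rw [integral_mul_exp_neg_div_eq_rpow_mul_setIntegral hh, ← mul_assoc, ← rpow_add hh,
    neg_add_cancel, rpow_zero, one_mul]

end Watson

lemma integral_Icc_neg_eq_two_mul_of_even {f : ℝ → ℝ} {a : ℝ} (ha : 0 ≤ a)
    (hf : ∀ s, f (-s) = f s) (hint : IntervalIntegrable f volume (-a) a) :
    ∫ s in Icc (-a) a, f s = 2 * ∫ s in (0 : ℝ)..a, f s := by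
  have hneg : ∫ s in -a..0, f s = ∫ s in (0 : ℝ)..a, f s := by
    simpa [hf] using (intervalIntegral.integral_comp_neg (a := 0) (b := a) f).symm
  rw [integral_Icc_eq_integral_Ioc, ← intervalIntegral.integral_of_le (by linarith),
    ← intervalIntegral.integral_add_adjacent_intervals (b := 0)
      (hint.mono_set (uIcc_subset_uIcc_left (by simp [ha])))
      (hint.mono_set (uIcc_subset_uIcc_right (by simp [ha]))), hneg]
  ring

lemma exp_neg_div_mul_integral_Icc_eq {g : ℝ → ℝ} (hg : ∀ s, g (-s) = g s) (hcont : Continuous g)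
    (b h : ℝ) :
    exp (-b / h) * ∫ s in Icc (-1 : ℝ) 1, g s * exp (b * |s| / h) =
      2 * ∫ t in (0 : ℝ)..1, g (1 - t) * exp (-(b * t) / h) := by
  set F : ℝ → ℝ := fun s => g s * exp (b * |s| / h)
  have hreflect : ∫ s in (0 : ℝ)..1, F s = ∫ t in (0 : ℝ)..1, F (1 - t) := by
    simp [intervalIntegral.integral_comp_sub_left F 1]
  rw [integral_Icc_neg_eq_two_mul_of_even zero_le_one (fun s => by simp [F, hg])
      ((by fun_prop : Continuous F).intervalIntegrable _ _), hreflect, mul_left_comm,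
    ← intervalIntegral.integral_const_mul]
  congr 1
  refine intervalIntegral.integral_congr fun t ht => ?_
  rw [uIcc_of_le zero_le_one] at ht
  simp only [F]
  rw [abs_of_nonneg (by linarith [ht.2]), mul_left_comm, ← exp_add]
  congr 2
  ring

theorem vh_leading_term_limit_general
    (φw : ℝ → ℂ) (A α : ℝ) (hα : 0 < α)
    (hw_cont : Continuous φw)
    (hw_sym : ∀ s : ℝ, ‖φw (-s)‖ = ‖φw s‖)
    (hw_exp : (fun t : ℝ => φw (1 - t) - (A : ℂ) * (t : ℂ) ^ (α : ℂ))
        =o[nhdsWithin 0 (Set.Ioi 0)] (fun t : ℝ => t ^ α)) :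
    Tendsto
      (fun h : ℝ => Real.exp (-π / h) * h ^ (-(1 + 2 * α)) *
        ∫ s in Set.Icc (-1 : ℝ) 1, ‖φw s‖ ^ 2 * Real.exp (π * |s| / h))
      (nhdsWithin 0 (Set.Ioi (0 : ℝ)))
      (nhds (2 * A ^ 2 * Real.Gamma (2 * α + 1) / π ^ (1 + 2 * α))) := by
  set ψ : ℝ → ℝ := fun t => ‖φw (1 - t)‖ ^ 2
  have hlim : Tendsto (fun t => ψ t / t ^ (2 * α)) (𝓝[>] 0) (𝓝 (A ^ 2)) := by
    rw [← sq_abs]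
    refine ((tendsto_norm_div_rpow_of_isLittleO hw_exp).pow 2).congr' ?_
    filter_upwards [self_mem_nhdsWithin] with t (ht : 0 < t)
    rw [div_pow, mul_comm, rpow_mul ht.le, rpow_two]
  have hwatson := (tendsto_rpow_mul_integral_mul_exp_neg_div (by linarith) pi_pos
    (by fun_prop : Continuous ψ).continuousOn hlim).const_mul 2
  rw [mul_div_assoc', ← mul_assoc] at hwatson
  rw [add_comm 1 (2 * α)]
  refine hwatson.congr' ?_
  filter_upwards with h
  rw [mul_right_comm (exp _),
    exp_neg_div_mul_integral_Icc_eq (fun s => by rw [hw_sym]) (by fun_prop)]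
  ring

/-- Leading-term limit:
`e^{−π/h} h^{−(1+2α)} ∫_{−1}^{1} |φ_w(s)|² e^{π|s|/h} ds → 2A²Γ(2α+1)/π^{1+2α}` as `h → 0`. -/
theorem vh_leading_term_limit
    (φw : ℝ → ℂ) (A α : ℝ) (hα : 0 < α)
    (hw_cont : Continuous φw)
    (hw_supp : ∀ s : ℝ, 1 < |s| → φw s = 0)
    (hw_sym : ∀ s : ℝ, ‖φw (-s)‖ = ‖φw s‖)
    (hw_exp : (fun t : ℝ => φw (1 - t) - (A : ℂ) * (t : ℂ) ^ (α : ℂ))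
        =o[nhdsWithin 0 (Set.Ioi 0)] (fun t : ℝ => t ^ α)) :
    Tendsto
      (fun h : ℝ => Real.exp (-π / h) * h ^ (-(1 + 2 * α)) *
        ∫ s in Set.Icc (-1 : ℝ) 1, ‖φw s‖ ^ 2 * Real.exp (π * |s| / h))
      (nhdsWithin 0 (Set.Ioi (0 : ℝ)))
      (nhds (2 * A ^ 2 * Real.Gamma (2 * α + 1) / π ^ (1 + 2 * α))) :=
  vh_leading_term_limit_general φw A α hα hw_cont hw_sym hw_exp
end

section
/- Let σ = (σ_j) be a stochastic process independent of an i.i.d. sequence Z = (Z_j), and let F^σ be the σ-algebra generated by the whole process σ. Let v_h(x) = (1/2π) ∫ (φ_w(s)/φ_k(s/h)) e^{−isx} ds where φ_k is the characteristic function of log Z_j² and φ_w is the (compactly supported, integrable) characteristic function of a kernel w. Then E[ v_h((x − log X_j²)/h) | F^σ ] = w((x − log σ_j²)/h) almost surely, where X_j = σ_j Z_j. -/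
/-!
Conditionally on `F^σ`, the volatility path is frozen and `Z_j` keeps its standard Gaussian law,
by independence. So the conditional expectation is the integral of
`b ↦ v_h((x - log σ_j²)/h - log(b²)/h)` against that law. Integrating the Fourier
representation of `v_h` over `b` (Fubini) multiplies `φ_w(s)/φ_k(s/h)` by the characteristic
function `φ_k(s/h)` of `log Z_j² / h`, which leaves the Fourier representation of `w`.
-/

open Real MeasureTheory ProbabilityTheory

noncomputable def invFourierIntegral (G : ℝ → ℂ) (y : ℝ) : ℂ :=
  (1 / (2 * π) : ℝ) * ∫ s : ℝ, G s * Complex.exp (-Complex.I * s * y)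

lemma norm_exp_neg_I_mul_mul (s r : ℝ) : ‖Complex.exp (-Complex.I * s * r)‖ = 1 := by
  rw [show -Complex.I * s * r = ((-(s * r) : ℝ) : ℂ) * Complex.I by push_cast; ring,
    Complex.norm_exp_ofReal_mul_I]

section InvFourierIntegral

variable {G : ℝ → ℂ}

lemma continuous_invFourierIntegral (hG : Integrable G) : Continuous (invFourierIntegral G) := by
  refine continuous_const.mul (continuous_of_dominated (bound := fun s => ‖G s‖) (fun y => ?_)
    (fun y => ae_of_all _ fun s => ?_) hG.norm (ae_of_all _ fun s => by fun_prop))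
  · exact hG.aestronglyMeasurable.mul (by fun_prop)
  · simp only [norm_mul, norm_exp_neg_I_mul_mul, mul_one, le_refl]

lemma norm_invFourierIntegral_le (G : ℝ → ℂ) (y : ℝ) :
    ‖invFourierIntegral G y‖ ≤ 1 / (2 * π) * ∫ s : ℝ, ‖G s‖ := by
  rw [invFourierIntegral, norm_mul, Complex.norm_real, Real.norm_of_nonneg (by positivity)]
  gcongr
  refine (norm_integral_le_integral_norm _).trans_eq (integral_congr_ae (ae_of_all _ fun s => ?_))
  simp only [norm_mul, norm_exp_neg_I_mul_mul, mul_one]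

lemma integral_invFourierIntegral_sub {α : Type*} [MeasurableSpace α] (μ : Measure α)
    [IsFiniteMeasure μ] {L : α → ℝ} (hL : Measurable L) (hG : Integrable G) (c : ℝ) :
    ∫ a, invFourierIntegral G (c - L a) ∂μ =
      invFourierIntegral (fun s => G s * ∫ a, Complex.exp (Complex.I * s * L a) ∂μ) c := by
  set F : α → ℝ → ℂ := fun a s => G s * Complex.exp (-Complex.I * s * ↑(c - L a))
  have hF_meas : AEStronglyMeasurable (Function.uncurry F) (μ.prod volume) :=
    (hG.aestronglyMeasurable.comp_quasiMeasurePreserving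
      Measure.quasiMeasurePreserving_snd).mul
      (by fun_prop : Measurable fun p : α × ℝ =>
        Complex.exp (-Complex.I * p.2 * ↑(c - L p.1))).aestronglyMeasurable
  have hF_norm : ∀ a s, ‖F a s‖ = ‖G s‖ := fun a s => by
    rw [norm_mul, norm_exp_neg_I_mul_mul, mul_one]
  have hF_int : Integrable (Function.uncurry F) (μ.prod volume) := by
    refine (integrable_prod_iff' hF_meas).mpr
      ⟨hF_meas.prod_swap.prodMk_left.mono fun s hs => ?_, ?_⟩
    · exact (integrable_const ‖G s‖).mono' hs (ae_of_all _ fun a => (hF_norm a s).le)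
    · simpa only [Function.uncurry_apply_pair, hF_norm, integral_const, smul_eq_mul]
        using hG.norm.const_mul (μ.real Set.univ)
  have hF_inner : ∀ s, ∫ a, F a s ∂μ =
      G s * (∫ a, Complex.exp (Complex.I * s * L a) ∂μ) * Complex.exp (-Complex.I * s * c) := by
    intro s
    have hsplit : ∀ a, F a s =
        G s * Complex.exp (-Complex.I * s * c) * Complex.exp (Complex.I * s * L a) := fun a => by
      simp only [F, mul_assoc, ← Complex.exp_add]
      push_cast; ring_nf
    simp_rw [hsplit, integral_const_mul]
    ring
  simp only [invFourierIntegral]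
  rw [integral_const_mul]
  congr 1
  exact (integral_integral_swap hF_int).trans (integral_congr_ae (ae_of_all _ hF_inner))

end InvFourierIntegral

section RealValued

variable {v : ℝ → ℝ} {G : ℝ → ℂ}

lemma continuous_of_ofReal_eq_invFourierIntegral (hG : Integrable G)
    (hv : ∀ x, (v x : ℂ) = invFourierIntegral G x) : Continuous v := by
  have hv_re : v = fun x => (invFourierIntegral G x).re := funext fun x => by
    rw [← hv, Complex.ofReal_re]
  rw [hv_re]
  exact Complex.continuous_re.comp (continuous_invFourierIntegral hG)

lemma integrable_comp_of_ofReal_eq_invFourierIntegral {α : Type*} [MeasurableSpace α]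
    {μ : Measure α} [IsFiniteMeasure μ] {g : α → ℝ} (hg : Measurable g) (hG : Integrable G)
    (hv : ∀ x, (v x : ℂ) = invFourierIntegral G x) : Integrable (fun a => v (g a)) μ := by
  refine Integrable.of_bound
    ((continuous_of_ofReal_eq_invFourierIntegral hG hv).measurable.comp hg).aestronglyMeasurable
    (1 / (2 * π) * ∫ s, ‖G s‖) (ae_of_all _ fun a => ?_)
  rw [← Complex.norm_real, hv]
  exact norm_invFourierIntegral_le G _

lemma integral_deconvolutionKernel_sub {α : Type*} [MeasurableSpace α] (ν : Measure α)
    [IsFiniteMeasure ν] {L : α → ℝ} (hL : Measurable L) {φw φk : ℝ → ℂ} {w vh : ℝ → ℝ} {h : ℝ}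
    (hφk : ∀ t : ℝ, φk t = ∫ a, Complex.exp (Complex.I * t * L a) ∂ν) (hφk_ne : ∀ t, φk t ≠ 0)
    (hvh_int : Integrable fun s : ℝ => φw s / φk (s / h))
    (hvh : ∀ x, (vh x : ℂ) = invFourierIntegral (fun s => φw s / φk (s / h)) x)
    (hw : ∀ y, (w y : ℂ) = invFourierIntegral φw y) (c : ℝ) :
    ∫ a, vh (c - L a / h) ∂ν = w c := by
  have hchar : ∀ s : ℝ, ∫ a, Complex.exp (Complex.I * s * ↑(L a / h)) ∂ν = φk (s / h) :=
    fun s => by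
      rw [hφk]
      congr 1 with a
      push_cast; ring_nf
  apply Complex.ofReal_injective
  rw [← integral_complex_ofReal, hw]
  simp_rw [hvh]
  rw [integral_invFourierIntegral_sub ν (hL.div_const h) hvh_int]
  simp_rw [hchar, div_mul_cancel₀ _ (hφk_ne _)]

lemma integral_deconvolutionKernel_log_sq_mul (ν : Measure ℝ) [IsFiniteMeasure ν]
    [NullSingletonClass ν] {φw φk : ℝ → ℂ} {w vh : ℝ → ℝ} {h : ℝ}
    (hφk : ∀ t : ℝ, φk t = ∫ b, Complex.exp (Complex.I * t * Real.log (b ^ 2)) ∂ν)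
    (hφk_ne : ∀ t, φk t ≠ 0) (hvh_int : Integrable fun s : ℝ => φw s / φk (s / h))
    (hvh : ∀ x, (vh x : ℂ) = invFourierIntegral (fun s => φw s / φk (s / h)) x)
    (hw : ∀ y, (w y : ℂ) = invFourierIntegral φw y) (x : ℝ) {a : ℝ} (ha : a ≠ 0) :
    ∫ b, vh ((x - Real.log ((a * b) ^ 2)) / h) ∂ν = w ((x - Real.log (a ^ 2)) / h) := by
  have hlog_meas : Measurable fun b : ℝ => Real.log (b ^ 2) :=
    Real.measurable_log.comp (measurable_id.pow_const 2)
  rw [← integral_deconvolutionKernel_sub ν hlog_meas hφk hφk_ne hvh_int hvh hw]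
  have hne : ∀ᵐ b ∂ν, b ≠ 0 := compl_mem_ae_iff.mpr (measure_singleton 0)
  refine integral_congr_ae (hne.mono fun b hb => congrArg vh ?_)
  rw [mul_pow, Real.log_mul (pow_ne_zero 2 ha) (pow_ne_zero 2 hb)]
  ring

end RealValued

lemma ProbabilityTheory.Indep.indepFun_process {Ω ι ι' β γ : Type*} {mΩ : MeasurableSpace Ω}
    [mβ : MeasurableSpace β] [mγ : MeasurableSpace γ] {μ : Measure Ω} {X : ι → Ω → β}
    {Y : ι' → Ω → γ} (hXY : Indep (⨆ i, mβ.comap (X i)) (⨆ i, mγ.comap (Y i)) μ) (j : ι') :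
    IndepFun (fun ω i => X i ω) (Y j) μ := by
  show Indep (MeasurableSpace.pi.comap _) (mγ.comap (Y j)) μ
  rw [MeasurableSpace.comap_process_pi X]
  exact indep_of_indep_of_le_right hXY (le_iSup (fun i => mγ.comap (Y i)) j)

lemma ProbabilityTheory.IndepFun.condExp_comap_ae_eq_integral_map {Ω β γ F : Type*}
    {mΩ : MeasurableSpace Ω} {mβ : MeasurableSpace β} [MeasurableSpace γ] [StandardBorelSpace γ]
    [Nonempty γ]
    [NormedAddCommGroup F] [NormedSpace ℝ F] [CompleteSpace F]
    {μ : Measure Ω} [IsProbabilityMeasure μ] {X : Ω → β} {Y : Ω → γ} (hXY : IndepFun X Y μ)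
    (hX : Measurable X) (hY : Measurable Y) {f : β × γ → F} (hf : StronglyMeasurable f)
    (hf_int : Integrable (fun ω => f (X ω, Y ω)) μ) :
    μ[fun ω => f (X ω, Y ω) | mβ.comap X] =ᵐ[μ] fun ω => ∫ y, f (X ω, y) ∂(μ.map Y) := by
  have hlaw : μ.map (fun ω => (X ω, Y ω)) = μ.map X ⊗ₘ Kernel.const β (μ.map Y) := by
    rw [Measure.compProd_const]
    exact (indepFun_iff_map_prod_eq_prod_map_map hX.aemeasurable hY.aemeasurable).mp hXY
  have hcond := condDistrib_ae_eq_of_measure_eq_compProd_of_measurable hX hY hlaw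
  filter_upwards [condExp_prod_ae_eq_integral_condDistrib hX hY.aemeasurable hf hf_int,
    ae_of_ae_map hX.aemeasurable hcond] with ω hω hω'
  rw [hω, hω', Kernel.const_apply]

theorem condexp_deconvolution_kernel_general
    {Ω : Type*} [MeasurableSpace Ω] (P : Measure Ω) [IsProbabilityMeasure P]
    (σp Z : ℕ → Ω → ℝ)
    (hσ_meas : ∀ j, Measurable (σp j)) (hZ_meas : ∀ j, Measurable (Z j))
    (hσ_pos : ∀ j ω, 0 < σp j ω)
    (hZ_gauss : ∀ j, Measure.map (Z j) P = gaussianReal 0 1)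
    (hindep : Indep (⨆ j, MeasurableSpace.comap (σp j) Real.measurableSpace)
                    (⨆ j, MeasurableSpace.comap (Z j) Real.measurableSpace) P)
    (φw φk : ℝ → ℂ) (w vh : ℝ → ℝ) (h : ℝ)
    (hφk : ∀ t : ℝ, φk t = ∫ ω, Complex.exp (Complex.I * t * Real.log ((Z 0 ω) ^ 2)) ∂P)
    (hφk_ne : ∀ t, φk t ≠ 0)
    (hvh_int : Integrable (fun s : ℝ => φw s / φk (s / h)))
    (hvh : ∀ x : ℝ, (vh x : ℂ) =
      (1 / (2 * π) : ℝ) * ∫ s : ℝ, φw s / φk (s / h) * Complex.exp (-Complex.I * s * x))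
    (hw : ∀ y : ℝ, (w y : ℂ) =
      (1 / (2 * π) : ℝ) * ∫ s : ℝ, φw s * Complex.exp (-Complex.I * s * y)) :
    ∀ (j : ℕ) (x : ℝ),
      P[(fun ω => vh ((x - Real.log ((σp j ω * Z j ω) ^ 2)) / h)) |
          (⨆ i, MeasurableSpace.comap (σp i) Real.measurableSpace)]
        =ᵐ[P] (fun ω => w ((x - Real.log ((σp j ω) ^ 2)) / h)) := by
  intro j x
  have hφk_gauss : ∀ t : ℝ,
      φk t = ∫ b, Complex.exp (Complex.I * t * Real.log (b ^ 2)) ∂gaussianReal 0 1 := fun t => by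
    rw [hφk, ← hZ_gauss 0, integral_map (hZ_meas 0).aemeasurable
      (Measurable.aestronglyMeasurable (by fun_prop))]
  have hσ_path_meas : Measurable fun ω i => σp i ω := measurable_pi_lambda _ hσ_meas
  have harg_meas : Measurable fun p : (ℕ → ℝ) × ℝ => (x - log ((p.1 j * p.2) ^ 2)) / h :=
    ((Real.measurable_log.comp (by fun_prop)).const_sub x).div_const h
  have hvh_cont := continuous_of_ofReal_eq_invFourierIntegral hvh_int hvh
  have := nullSingletonClass_gaussianReal (μ := 0) one_ne_zero
  rw [← MeasurableSpace.comap_process_pi σp]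
  refine ((hindep.indepFun_process j).condExp_comap_ae_eq_integral_map hσ_path_meas (hZ_meas j)
    (hvh_cont.measurable.comp harg_meas).stronglyMeasurable
    (integrable_comp_of_ofReal_eq_invFourierIntegral (harg_meas.comp
      (hσ_path_meas.prodMk (hZ_meas j))) hvh_int hvh)).trans (ae_of_all _ fun ω => ?_)
  rw [hZ_gauss j]
  exact integral_deconvolutionKernel_log_sq_mul _ hφk_gauss hφk_ne hvh_int hvh hw x
    (hσ_pos j ω).ne'

/-- If the volatility process `σ` is independent of the i.i.d. standard Gaussian noise `Z`,
`φ_k` is the characteristic function of `log Z_j²`, `v_h` is the deconvolution kernel built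
from `φ_w` and `φ_k`, and `w` is the inverse Fourier transform of `φ_w`, then
`E[v_h((x − log X_j²)/h) | F^σ] = w((x − log σ_j²)/h)` a.s., where `X_j = σ_j Z_j`. -/
theorem condexp_deconvolution_kernel
    {Ω : Type*} [MeasurableSpace Ω] (P : Measure Ω) [IsProbabilityMeasure P]
    (σp Z : ℕ → Ω → ℝ)
    (hσ_meas : ∀ j, Measurable (σp j)) (hZ_meas : ∀ j, Measurable (Z j))
    (hσ_pos : ∀ j ω, 0 < σp j ω)
    (hZ_iid : iIndepFun Z P)
    (hZ_gauss : ∀ j, Measure.map (Z j) P = gaussianReal 0 1)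
    (hindep : Indep (⨆ j, MeasurableSpace.comap (σp j) Real.measurableSpace)
                    (⨆ j, MeasurableSpace.comap (Z j) Real.measurableSpace) P)
    (φw φk : ℝ → ℂ) (w vh : ℝ → ℝ) (h : ℝ) (hh : 0 < h)
    (hφw_int : Integrable φw)
    (hφw_supp : ∀ s : ℝ, 1 < |s| → φw s = 0)
    (hφk : ∀ t : ℝ, φk t = ∫ ω, Complex.exp (Complex.I * t * Real.log ((Z 0 ω) ^ 2)) ∂P)
    (hφk_ne : ∀ t, φk t ≠ 0)
    (hvh_int : Integrable (fun s : ℝ => φw s / φk (s / h)))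
    (hvh : ∀ x : ℝ, (vh x : ℂ) =
      (1 / (2 * π) : ℝ) * ∫ s : ℝ, φw s / φk (s / h) * Complex.exp (-Complex.I * s * x))
    (hw : ∀ y : ℝ, (w y : ℂ) =
      (1 / (2 * π) : ℝ) * ∫ s : ℝ, φw s * Complex.exp (-Complex.I * s * y)) :
    ∀ (j : ℕ) (x : ℝ),
      P[(fun ω => vh ((x - Real.log ((σp j ω * Z j ω) ^ 2)) / h)) |
          (⨆ i, MeasurableSpace.comap (σp i) Real.measurableSpace)]
        =ᵐ[P] (fun ω => w ((x - Real.log ((σp j ω) ^ 2)) / h)) :=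
  condexp_deconvolution_kernel_general P σp Z hσ_meas hZ_meas hσ_pos hZ_gauss hindep φw φk w vh h
    hφk hφk_ne hvh_int hvh hw
end
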